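/- Let T be a lexicographically ordered ω₁-tree and let U be a downward-closed subtree of T of height ω₁. Then the set of cofinal branches of U that are local end points of U has cardinality at most ℵ₁. (In fact, the map sending each local right end point to a witnessing element t is one-to-one into T, and likewise for local left end points.) -/

import Mathlib

noncomputable section

open Cardinal Set

def omega1 : Ordinal := (Cardinal.aleph 1).ord

def omega2 : Ordinal := (Cardinal.aleph 2).ord

/-- The height of an element `t`: the order type of its set of strict predecessors. -/
def htOf {X : Type} (lt : X → X → Prop)
    (wo : ∀ t : X, IsWellOrder {s : X // lt s t} fun a b => lt a.1 b.1) (t : X) : Ordinal :=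
  @Ordinal.type {s : X // lt s t} (fun a b => lt a.1 b.1) (wo t)

/-- A lexicographically ordered (normal) `ω₁`-tree. -/
structure LexOmega1Tree where
  T : Type
  lt : T → T → Prop
  lt_irrefl : ∀ a : T, ¬ lt a a
  lt_trans : ∀ {a b c : T}, lt a b → lt b c → lt a c
  /-- the strict predecessors of any element are well-ordered -/
  predWO : ∀ t : T, IsWellOrder {s : T // lt s t} fun a b => lt a.1 b.1
  /-- every level is countable -/
  level_countable : ∀ α : Ordinal, {t : T | htOf lt predWO t = α}.Countable
  /-- levels are nonempty exactly below `ω₁` -/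
  level_nonempty : ∀ α : Ordinal, (∃ t : T, htOf lt predWO t = α) ↔ α < omega1
  /-- normality: distinct elements of the same limit height have different predecessors -/
  normal : ∀ s t : T, htOf lt predWO s = htOf lt predWO t →
    Order.IsSuccLimit (htOf lt predWO s) → (∀ u : T, lt u s ↔ lt u t) → s = t
  /-- the lexicographic comparison of distinct elements of equal height -/
  lexlt : T → T → Prop
  lexlt_same : ∀ a b : T, lexlt a b → htOf lt predWO a = htOf lt predWO b ∧ a ≠ b
  lexlt_tricho : ∀ a b : T, htOf lt predWO a = htOf lt predWO b → a ≠ b →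
    lexlt a b ∨ lexlt b a
  lexlt_asymm : ∀ a b : T, lexlt a b → ¬ lexlt b a
  lexlt_trans : ∀ {a b c : T}, lexlt a b → lexlt b c → lexlt a c
  /-- coherence: the lexicographic comparison is decided at the splitting level -/
  lexlt_coh : ∀ a b a' b' : T, lexlt a b → lt a a' → lt b b' →
    htOf lt predWO a' = htOf lt predWO b' → lexlt a' b'

namespace LexOmega1Tree

variable (S : LexOmega1Tree)

def ht : S.T → Ordinal := htOf S.lt S.predWO

def le (a b : S.T) : Prop := S.lt a b ∨ a = b

/-- a cofinal branch : a downward closed chain meeting every level -/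
def IsBranch (b : Set S.T) : Prop :=
  (∀ s t : S.T, t ∈ b → S.lt s t → s ∈ b) ∧
  (∀ s t : S.T, s ∈ b → t ∈ b → s = t ∨ S.lt s t ∨ S.lt t s) ∧
  (∀ α : Ordinal, α < omega1 → ∃ t ∈ b, S.ht t = α)

/-- the set `𝓑(T)` of cofinal branches -/
def Branch : Type := {b : Set S.T // S.IsBranch b}

/-- the lexicographic order on branches (and on arbitrary sets of nodes) -/
def blex (A B : Set S.T) : Prop := ∃ a ∈ A, ∃ b ∈ B, S.lexlt a b

/-- the order topology on `(𝓑(T), <lex)`, generated by the open rays -/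
def branchTop : TopologicalSpace S.Branch :=
  TopologicalSpace.generateFrom
    {s : Set S.Branch | ∃ a : S.Branch, s = {x | S.blex a.1 x.1} ∨ s = {x | S.blex x.1 a.1}}

/-- `b` is a local right end point of the downward closed subtree `W` -/
def IsLocalRightEP (W b : Set S.T) : Prop :=
  ∃ t ∈ b, ∀ s ∈ b, S.ht t ≤ S.ht s →
    ∀ u ∈ W, S.ht u = S.ht s → S.le t u → u = s ∨ S.lexlt u s

/-- `b` is a local left end point of the downward closed subtree `W` -/
def IsLocalLeftEP (W b : Set S.T) : Prop :=
  ∃ t ∈ b, ∀ s ∈ b, S.ht t ≤ S.ht s →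
    ∀ u ∈ W, S.ht u = S.ht s → S.le t u → u = s ∨ S.lexlt s u

def IsLocalEP (W b : Set S.T) : Prop := S.IsLocalRightEP W b ∨ S.IsLocalLeftEP W b

end LexOmega1Tree

/-!
A local end point `b` of `U` is determined by any node `t ∈ b` witnessing it: above `t`, at
every level, `b` passes through the lexicographically extreme node of `U` above `t`, so two
same-sided local end points through `t` agree on all levels beyond `ht t` and hence coincide.
Choosing a witness therefore injects the local right (and the local left) end points into `T`,
and `|T| ≤ ℵ₁` since `T` is a union of `ℵ₁` countable levels.
-/

namespace LexOmega1Tree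

variable (S : LexOmega1Tree)

instance (t : S.T) : IsWellOrder {s : S.T // S.lt s t} fun a b => S.lt a.1 b.1 :=
  S.predWO t

open scoped InitialSeg in
def predSeg {a b : S.T} (h : S.lt a b) :
    (fun x y : {s : S.T // S.lt s a} => S.lt x.1 y.1) ≺i
      (fun x y : {s : S.T // S.lt s b} => S.lt x.1 y.1) where
  toFun u := ⟨u.1, S.lt_trans u.2 h⟩
  inj' _ _ huv := Subtype.ext (congrArg Subtype.val huv :)
  map_rel_iff' := Iff.rfl
  top := ⟨a, h⟩
  mem_range_iff_rel' v := ⟨fun ⟨u, hu⟩ => hu ▸ u.2, fun hv => ⟨⟨v.1, hv⟩, rfl⟩⟩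

theorem ht_lt_ht {a b : S.T} (h : S.lt a b) : S.ht a < S.ht b :=
  (S.predSeg h).ordinal_type_lt

theorem ht_lt_omega1 (t : S.T) : S.ht t < omega1 :=
  (S.level_nonempty (S.ht t)).1 ⟨t, rfl⟩

theorem mk_T_le_aleph_one : #S.T ≤ aleph 1 := by
  have key := lift_mk_le_lift_mk_mul_of_lift_mk_preimage_le (c := Cardinal.lift.{1} ℵ₀)
    (fun t : S.T => (⟨S.ht t, S.ht_lt_omega1 t⟩ : Iio omega1)) fun α => by
      rw [lift_le]
      refine (Countable.mono ?_ (S.level_countable α.1)).le_aleph0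
      intro t ht
      exact congrArg Subtype.val (Set.mem_singleton_iff.1 ht)
  rwa [mk_Iio_ordinal, omega1, card_ord, lift_lift, ← lift_mul, lift_le,
    mul_aleph0_eq (aleph0_le_aleph 1)] at key

variable {S}

theorem IsBranch.le_of_ht_le {b : Set S.T} (hb : S.IsBranch b) {x s : S.T} (hx : x ∈ b)
    (hs : s ∈ b) (h : S.ht x ≤ S.ht s) : S.le x s := by
  rcases hb.2.1 x s hx hs with rfl | hxs | hsx
  · exact Or.inr rfl
  · exact Or.inl hxs
  · exact absurd (S.ht_lt_ht hsx) h.not_gt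

variable (S) in
/-- Above `t`, the branch `b` runs along the `R`-greatest nodes of `W`; local right end points
are the case `R = lexlt`, local left end points the case `R = flip lexlt`. -/
def IsExtremeAbove (R : S.T → S.T → Prop) (W b : Set S.T) (t : S.T) : Prop :=
  ∀ s ∈ b, S.ht t ≤ S.ht s → ∀ u ∈ W, S.ht u = S.ht s → S.le t u → u = s ∨ R u s

theorem IsExtremeAbove.eq_of_ht_eq {R : S.T → S.T → Prop} (hR : ∀ a c, R a c → ¬ R c a)
    {W b b' : Set S.T} (hb : S.IsBranch b) (hb' : S.IsBranch b') (hbW : b ⊆ W) (hb'W : b' ⊆ W)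
    {t : S.T} (htb : t ∈ b) (htb' : t ∈ b')
    (he : S.IsExtremeAbove R W b t) (he' : S.IsExtremeAbove R W b' t)
    {s s' : S.T} (hs : s ∈ b) (hs' : s' ∈ b') (hss' : S.ht s = S.ht s')
    (hts : S.ht t ≤ S.ht s) : s = s' := by
  have hts' : S.ht t ≤ S.ht s' := hss' ▸ hts
  by_contra hne
  have h1 := (he s hs hts s' (hb'W hs') hss'.symm (hb'.le_of_ht_le htb' hs' hts')).resolve_left
    (Ne.symm hne)
  have h2 := (he' s' hs' hts' s (hbW hs) hss' (hb.le_of_ht_le htb hs hts)).resolve_left hne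
  exact hR _ _ h1 h2

theorem IsExtremeAbove.subset {R : S.T → S.T → Prop} (hR : ∀ a c, R a c → ¬ R c a)
    {W b b' : Set S.T} (hb : S.IsBranch b) (hb' : S.IsBranch b') (hbW : b ⊆ W) (hb'W : b' ⊆ W)
    {t : S.T} (htb : t ∈ b) (htb' : t ∈ b')
    (he : S.IsExtremeAbove R W b t) (he' : S.IsExtremeAbove R W b' t) : b ⊆ b' := by
  intro x hx
  have hα := max_lt (S.ht_lt_omega1 x) (S.ht_lt_omega1 t)
  obtain ⟨s, hs, hsα⟩ := hb.2.2 _ hα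
  obtain ⟨s', hs', hs'α⟩ := hb'.2.2 _ hα
  obtain rfl := he.eq_of_ht_eq hR hb hb' hbW hb'W htb htb' he' hs hs' (hsα.trans hs'α.symm)
    (hsα ▸ le_max_right _ _)
  rcases hb.le_of_ht_le hx hs (hsα ▸ le_max_left _ _) with hxs | rfl
  · exact hb'.1 x s hs' hxs
  · exact hs'

variable (S) in
def extremeBranches (R : S.T → S.T → Prop) (W : Set S.T) : Set (Set S.T) :=
  {b | S.IsBranch b ∧ b ⊆ W ∧ ∃ t ∈ b, S.IsExtremeAbove R W b t}

theorem mk_extremeBranches_le {R : S.T → S.T → Prop} (hR : ∀ a c, R a c → ¬ R c a)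
    (W : Set S.T) : #(S.extremeBranches R W) ≤ #S.T := by
  refine mk_le_of_injective (f := fun b => b.2.2.2.choose) fun b b' hbb' => ?_
  obtain ⟨hb, hbW, -⟩ := b.2
  obtain ⟨hb', hb'W, -⟩ := b'.2
  obtain ⟨htb, he⟩ := b.2.2.2.choose_spec
  obtain ⟨htb', he'⟩ := b'.2.2.2.choose_spec
  dsimp only at hbb'
  rw [← hbb'] at htb' he'
  exact Subtype.ext <| (he.subset hR hb hb' hbW hb'W htb htb' he').antisymm
    (he'.subset hR hb' hb hb'W hbW htb' htb he)

theorem setOf_isLocalEP_subset (W : Set S.T) :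
    {b : Set S.T | S.IsBranch b ∧ b ⊆ W ∧ S.IsLocalEP W b} ⊆
      S.extremeBranches S.lexlt W ∪ S.extremeBranches (flip S.lexlt) W :=
  fun _ ⟨hb, hbW, hep⟩ => hep.imp (⟨hb, hbW, ·⟩) (⟨hb, hbW, ·⟩)

end LexOmega1Tree

theorem stmt3_general (S : LexOmega1Tree) (U : Set S.T) :
    #{b : Set S.T | S.IsBranch b ∧ b ⊆ U ∧ S.IsLocalEP U b} ≤ Cardinal.aleph 1 :=
  calc _ ≤ #↥(S.extremeBranches S.lexlt U ∪ S.extremeBranches (flip S.lexlt) U) :=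
        mk_le_mk_of_subset (S.setOf_isLocalEP_subset U)
    _ ≤ _ := mk_union_le _ _
    _ ≤ aleph 1 := add_le_of_le (aleph0_le_aleph 1)
        ((LexOmega1Tree.mk_extremeBranches_le S.lexlt_asymm U).trans S.mk_T_le_aleph_one)
        ((LexOmega1Tree.mk_extremeBranches_le (fun a c h => S.lexlt_asymm c a h) U).trans
          S.mk_T_le_aleph_one)

/-- If `U` is a downward-closed subtree of height `ω₁` of a lexicographically
ordered `ω₁`-tree `T`, then the set of cofinal branches of `U` that are local end points of
`U` has cardinality at most `ℵ₁`. -/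
theorem stmt3 (S : LexOmega1Tree) (U : Set S.T)
    (hdc : ∀ s t : S.T, t ∈ U → S.lt s t → s ∈ U)
    (hht : ∀ α : Ordinal, α < omega1 → ∃ t ∈ U, S.ht t = α) :
    #{b : Set S.T | S.IsBranch b ∧ b ⊆ U ∧ S.IsLocalEP U b} ≤ Cardinal.aleph 1 :=
  stmt3_general S U
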